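/- Norm-bounded identification error theorem: Let X̃⁺ ∈ ℝ^{n×T} and Ψ̃ ∈ ℝ^{k×T} with Ψ̃ of full row rank, and let E_{X⁺}, E_Ψ be perturbation matrices whose columns have Euclidean norms at most ε_x and ε respectively. Assume σ_min(Ψ̃) > √T·ε. Define Ĝ = X̃⁺Ψ̃ᵀ(Ψ̃Ψ̃ᵀ)⁻¹ and G = (X̃⁺+E_{X⁺})(Ψ̃+E_Ψ)ᵀ[(Ψ̃+E_Ψ)(Ψ̃+E_Ψ)ᵀ]⁻¹. Then ‖G − Ĝ‖₂ ≤ T·(‖Ĝ‖₂·Γ_W + Γ_Y)/(σ_min(Ψ̃) − √T·ε)², where Γ_Y = σ_max(X̃⁺)ε/√T + σ_max(Ψ̃)ε_x/√T + ε_x·ε and Γ_W = 2ε·σ_max(Ψ̃)/√T + ε². -/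

import Mathlib

/-!
With `S = ΨΨᵀ` and `S' = (Ψ + E_Ψ)(Ψ + E_Ψ)ᵀ`, the identity `Ĝ S = X Ψᵀ` gives
`G - Ĝ = ((X + E_X)(Ψ + E_Ψ)ᵀ - XΨᵀ - Ĝ (S' - S)) S'⁻¹`, so the error is controlled by the sizes
of the two Gram perturbations and by `‖S'⁻¹‖₂`. The column bounds give `‖E‖₂ ≤ √T ε` through the
Frobenius norm, which bounds the perturbations by products of norms. Since
`‖(Ψ + E_Ψ)ᵀ x‖ ≥ (σ_min(Ψ) - √T ε) ‖x‖`, the matrix `S'` satisfies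
`⟪S' x, x⟫ ≥ (σ_min(Ψ) - √T ε)² ‖x‖²`, hence is invertible with `‖S'⁻¹‖₂ ≤ (σ_min(Ψ) - √T ε)⁻²`.
-/

open scoped RealInnerProductSpace

noncomputable def opNorm {m n : ℕ} (M : Matrix (Fin m) (Fin n) ℝ) : ℝ :=
  ‖LinearMap.toContinuousLinearMap (Matrix.toEuclideanLin (𝕜 := ℝ) M)‖

noncomputable def lamMin {k : ℕ} (S : Matrix (Fin k) (Fin k) ℝ) : ℝ :=
  ⨅ x : {x : EuclideanSpace ℝ (Fin k) // ‖x‖ = 1},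
    ⟪(Matrix.toEuclideanLin (𝕜 := ℝ) S) x.1, x.1⟫

noncomputable def lamMax {k : ℕ} (S : Matrix (Fin k) (Fin k) ℝ) : ℝ :=
  ⨆ x : {x : EuclideanSpace ℝ (Fin k) // ‖x‖ = 1},
    ⟪(Matrix.toEuclideanLin (𝕜 := ℝ) S) x.1, x.1⟫

noncomputable def sigmaMax {m n : ℕ} (M : Matrix (Fin m) (Fin n) ℝ) : ℝ := opNorm M

noncomputable def sigmaMin {m n : ℕ} (M : Matrix (Fin m) (Fin n) ℝ) : ℝ :=
  Real.sqrt (lamMin (M * M.transpose))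

open scoped Matrix.Norms.L2Operator

namespace Matrix

theorem mul_nonsing_inv_sub_eq {m n R : Type*} [Fintype n] [DecidableEq n] [CommRing R]
    {G Y Y' : Matrix m n R} {S S' : Matrix n n R} (hS' : IsUnit S'.det) (hG : G * S = Y) :
    Y' * S'⁻¹ - G = (Y' - Y - G * (S' - S)) * S'⁻¹ := by
  rw [← hG, Matrix.mul_sub, Matrix.sub_mul, Matrix.sub_mul, Matrix.sub_mul, Matrix.mul_assoc G S',
    mul_nonsing_inv _ hS', Matrix.mul_one]
  abel

variable {l m n : Type*} [Fintype l] [Fintype m] [Fintype n] [DecidableEq n]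

theorem l2_opNorm_le_sqrt_sum_sq (M : Matrix m n ℝ) : ‖M‖ ≤ √(∑ i, ∑ j, M i j ^ 2) := by
  rw [l2_opNorm_def]
  refine ContinuousLinearMap.opNorm_le_bound _ (Real.sqrt_nonneg _) fun x => ?_
  simp only [LinearEquiv.trans_apply, LinearMap.coe_toContinuousLinearMap', EuclideanSpace.norm_eq,
    ofLp_toLpLin, toLin'_apply, Real.norm_eq_abs, sq_abs]
  rw [← Real.sqrt_mul (by positivity), Finset.sum_mul]
  gcongr with i
  exact Finset.sum_mul_sq_le_sq_mul_sq _ _ _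

theorem l2_opNorm_le_sqrt_card_mul (M : Matrix m n ℝ) {e : ℝ} (he : 0 ≤ e)
    (hcol : ∀ j, √(∑ i, M i j ^ 2) ≤ e) : ‖M‖ ≤ √(Fintype.card n) * e := by
  have hsum : ∑ j, ∑ i, M i j ^ 2 ≤ ∑ _j : n, e ^ 2 :=
    Finset.sum_le_sum fun j _ => (Real.sqrt_le_left he).1 (hcol j)
  calc ‖M‖ ≤ √(∑ i, ∑ j, M i j ^ 2) := l2_opNorm_le_sqrt_sum_sq M
    _ ≤ √(Fintype.card n * e ^ 2) := by
      rw [Finset.sum_comm]; simpa using Real.sqrt_le_sqrt hsum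
    _ = √(Fintype.card n) * e := by rw [Real.sqrt_mul (Nat.cast_nonneg _), Real.sqrt_sq he]

theorem l2_opNorm_transpose [DecidableEq m] (M : Matrix m n ℝ) : ‖Mᵀ‖ = ‖M‖ := by
  rw [← conjTranspose_eq_transpose_of_trivial, l2_opNorm_conjTranspose]

theorem l2_opNorm_add_mul_transpose_add_sub_le [DecidableEq m] (A E : Matrix l n ℝ)
    (B F : Matrix m n ℝ)
    {e f : ℝ} (hE : ‖E‖ ≤ e) (hF : ‖F‖ ≤ f) :
    ‖(A + E) * (B + F)ᵀ - A * Bᵀ‖ ≤ ‖A‖ * f + e * ‖B‖ + e * f := by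
  have hexp : (A + E) * (B + F)ᵀ - A * Bᵀ = A * Fᵀ + E * Bᵀ + E * Fᵀ := by
    rw [transpose_add, Matrix.add_mul, Matrix.mul_add, Matrix.mul_add]; abel
  have he : 0 ≤ e := (norm_nonneg E).trans hE
  rw [hexp]
  refine (norm_add₃_le).trans ?_
  gcongr <;> refine (l2_opNorm_mul _ _).trans ?_ <;> rw [l2_opNorm_transpose] <;> gcongr

theorem inner_toEuclideanLin_mul_transpose [DecidableEq m] (M : Matrix m n ℝ)
    (x y : EuclideanSpace ℝ m) :
    ⟪toEuclideanLin (M * Mᵀ) x, y⟫ = ⟪toEuclideanLin Mᵀ x, toEuclideanLin Mᵀ y⟫ := by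
  have hM : toEuclideanLin M = (toEuclideanLin (𝕜 := ℝ) Mᵀ).adjoint := by
    rw [← toEuclideanLin_conjTranspose_eq_adjoint, conjTranspose_eq_transpose_of_trivial,
      transpose_transpose]
  rw [toLpLin_mul_same, LinearMap.comp_apply, hM, LinearMap.adjoint_inner_left]

theorem le_norm_toEuclideanLin_add_transpose [DecidableEq m] {A E : Matrix m n ℝ} {c : ℝ}
    (h : ∀ x, c * ‖x‖ ≤ ‖toEuclideanLin Aᵀ x‖) (x : EuclideanSpace ℝ m) :
    (c - ‖E‖) * ‖x‖ ≤ ‖toEuclideanLin (A + E)ᵀ x‖ := by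
  have hE : ‖toEuclideanLin Eᵀ x‖ ≤ ‖E‖ * ‖x‖ := by
    rw [← l2_opNorm_transpose]; exact Eᵀ.l2_opNorm_mulVec x
  have hA : toEuclideanLin Aᵀ x = toEuclideanLin (A + E)ᵀ x - toEuclideanLin Eᵀ x := by
    simp only [transpose_add, map_add, LinearMap.add_apply, add_sub_cancel_right]
  have htri := norm_sub_le (toEuclideanLin (A + E)ᵀ x) (toEuclideanLin Eᵀ x)
  rw [← hA] at htri
  linarith [h x]

theorem sq_mul_le_norm_toEuclideanLin_mul_transpose [DecidableEq m] {A : Matrix m n ℝ} {c : ℝ}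
    (hc : 0 ≤ c) (h : ∀ x, c * ‖x‖ ≤ ‖toEuclideanLin Aᵀ x‖) (x : EuclideanSpace ℝ m) :
    c ^ 2 * ‖x‖ ≤ ‖toEuclideanLin (A * Aᵀ) x‖ := by
  have key : (c * ‖x‖) * (c * ‖x‖) ≤ ‖toEuclideanLin (A * Aᵀ) x‖ * ‖x‖ :=
    calc (c * ‖x‖) * (c * ‖x‖) ≤ ‖toEuclideanLin Aᵀ x‖ * ‖toEuclideanLin Aᵀ x‖ :=
          mul_self_le_mul_self (by positivity) (h x)
      _ = ⟪toEuclideanLin (A * Aᵀ) x, x⟫ := by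
          rw [inner_toEuclideanLin_mul_transpose, real_inner_self_eq_norm_mul_norm]
      _ ≤ ‖toEuclideanLin (A * Aᵀ) x‖ * ‖x‖ := real_inner_le_norm _ _
  rcases (norm_nonneg x).eq_or_lt with hx | hx
  · simp [← hx]
  · nlinarith

theorem isUnit_det_of_mul_norm_le {S : Matrix n n ℝ} {c : ℝ} (hc : 0 < c)
    (h : ∀ x, c * ‖x‖ ≤ ‖toEuclideanLin S x‖) : IsUnit S.det := by
  rw [isUnit_iff_ne_zero, Ne, ← exists_mulVec_eq_zero_iff]
  rintro ⟨v, hv, hSv⟩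
  have hle := h (WithLp.toLp 2 v)
  rw [toLpLin_toLp, toLin'_apply, hSv, WithLp.toLp_zero, norm_zero] at hle
  have hpos : 0 < ‖WithLp.toLp 2 v‖ := norm_pos_iff.2 (by simpa using hv)
  exact (mul_pos hc hpos).not_ge hle

theorem l2_opNorm_nonsing_inv_le {S : Matrix n n ℝ} {c : ℝ} (hc : 0 < c)
    (h : ∀ x, c * ‖x‖ ≤ ‖toEuclideanLin S x‖) : ‖S⁻¹‖ ≤ c⁻¹ := by
  rw [l2_opNorm_def]
  refine ContinuousLinearMap.opNorm_le_bound _ (inv_nonneg.2 hc.le) fun x => ?_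
  have hSS : toEuclideanLin S (toEuclideanLin S⁻¹ x) = x := by
    rw [← LinearMap.comp_apply, ← toLpLin_mul_same,
      mul_nonsing_inv _ (isUnit_det_of_mul_norm_le hc h), toLpLin_one, LinearMap.id_apply]
  have hle := h (toEuclideanLin S⁻¹ x)
  rw [hSS] at hle
  rwa [inv_mul_eq_div, le_div_iff₀' hc]

theorem l2_opNorm_mul_nonsing_inv_sub_le {𝕜 : Type*} [RCLike 𝕜]
    {G Y Y' : Matrix m n 𝕜} {S S' : Matrix n n 𝕜} (hS' : IsUnit S'.det) (hG : G * S = Y)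
    {a b d : ℝ} (hY : ‖Y' - Y‖ ≤ a) (hS : ‖S' - S‖ ≤ b) (hinv : ‖S'⁻¹‖ ≤ d) :
    ‖Y' * S'⁻¹ - G‖ ≤ (‖G‖ * b + a) * d := by
  have hnum : ‖Y' - Y - G * (S' - S)‖ ≤ ‖G‖ * b + a :=
    calc ‖Y' - Y - G * (S' - S)‖ ≤ ‖Y' - Y‖ + ‖G * (S' - S)‖ := norm_sub_le _ _
      _ ≤ a + ‖G‖ * b := add_le_add hY ((l2_opNorm_mul _ _).trans (by gcongr))
      _ = ‖G‖ * b + a := add_comm _ _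
  rw [mul_nonsing_inv_sub_eq hS' hG]
  exact (l2_opNorm_mul _ _).trans
    (mul_le_mul hnum hinv (norm_nonneg _) ((norm_nonneg _).trans hnum))

end Matrix

open Matrix

theorem opNorm_eq_norm {m n : ℕ} (M : Matrix (Fin m) (Fin n) ℝ) : opNorm M = ‖M‖ := rfl

theorem sigmaMin_mul_norm_le {m n : ℕ} (M : Matrix (Fin m) (Fin n) ℝ)
    (x : EuclideanSpace ℝ (Fin m)) : sigmaMin M * ‖x‖ ≤ ‖toEuclideanLin Mᵀ x‖ := by
  rcases eq_or_ne x 0 with rfl | hx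
  · simp
  set u := ‖x‖⁻¹ • x
  have hu : ‖u‖ = 1 := norm_smul_inv_norm hx
  have hbdd : BddBelow (Set.range fun z : {z : EuclideanSpace ℝ (Fin m) // ‖z‖ = 1} =>
      ⟪toEuclideanLin (M * Mᵀ) z.1, z.1⟫) := by
    refine ⟨0, ?_⟩
    rintro _ ⟨z, rfl⟩
    exact real_inner_self_nonneg.trans_eq (inner_toEuclideanLin_mul_transpose M z z).symm
  have hlam : lamMin (M * Mᵀ) ≤ ‖toEuclideanLin Mᵀ u‖ ^ 2 := by
    refine (ciInf_le hbdd ⟨u, hu⟩).trans_eq ?_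
    rw [inner_toEuclideanLin_mul_transpose, real_inner_self_eq_norm_sq]
  have hσ : sigmaMin M ≤ ‖toEuclideanLin Mᵀ u‖ := (Real.sqrt_le_left (norm_nonneg _)).2 hlam
  calc sigmaMin M * ‖x‖ ≤ ‖toEuclideanLin Mᵀ u‖ * ‖x‖ := by gcongr
    _ = ‖toEuclideanLin Mᵀ x‖ := by
      rw [map_smul, norm_smul, norm_inv, norm_norm, mul_right_comm,
        inv_mul_cancel₀ (norm_ne_zero_iff.2 hx), one_mul]

theorem stmt_11_general (n k T : ℕ) (hT : 1 ≤ T)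
    (ε εx : ℝ) (hε : 0 ≤ ε) (hεx : 0 ≤ εx)
    (Xp EXp : Matrix (Fin n) (Fin T) ℝ) (Ψ EΨ : Matrix (Fin k) (Fin T) ℝ)
    (hPD : (Ψ * Ψ.transpose).PosDef)
    (hcolX : ∀ t, Real.sqrt (∑ i, (EXp i t) ^ 2) ≤ εx)
    (hcolΨ : ∀ t, Real.sqrt (∑ i, (EΨ i t) ^ 2) ≤ ε)
    (hPE : sigmaMin Ψ > Real.sqrt T * ε)
    (Ghat G : Matrix (Fin n) (Fin k) ℝ)
    (hGhat : Ghat = Xp * Ψ.transpose * (Ψ * Ψ.transpose)⁻¹)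
    (hG : G = (Xp + EXp) * (Ψ + EΨ).transpose *
      ((Ψ + EΨ) * (Ψ + EΨ).transpose)⁻¹) :
    opNorm (G - Ghat) ≤
      (T : ℝ) * (opNorm Ghat *
          (2 * ε * sigmaMax Ψ / Real.sqrt T + ε ^ 2) +
        (sigmaMax Xp * ε / Real.sqrt T + sigmaMax Ψ * εx / Real.sqrt T + εx * ε))
      / (sigmaMin Ψ - Real.sqrt T * ε) ^ 2 := by
  have hT0 : (0 : ℝ) < T := by exact_mod_cast hT
  set s := √(T : ℝ)
  have hs : 0 < s := Real.sqrt_pos.2 hT0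
  have hsT : (T : ℝ) = s ^ 2 := (Real.sq_sqrt hT0.le).symm
  have hEX : ‖EXp‖ ≤ s * εx := by simpa using l2_opNorm_le_sqrt_card_mul EXp hεx hcolX
  have hEΨ : ‖EΨ‖ ≤ s * ε := by simpa using l2_opNorm_le_sqrt_card_mul EΨ hε hcolΨ
  set c := sigmaMin Ψ - s * ε
  have hc : 0 < c := sub_pos.2 hPE
  have hlow (x : EuclideanSpace ℝ (Fin k)) : c * ‖x‖ ≤ ‖toEuclideanLin (Ψ + EΨ)ᵀ x‖ :=
    (mul_le_mul_of_nonneg_right (sub_le_sub_left hEΨ _) (norm_nonneg x)).trans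
      (le_norm_toEuclideanLin_add_transpose (sigmaMin_mul_norm_le Ψ) x)
  have hS' := sq_mul_le_norm_toEuclideanLin_mul_transpose hc.le hlow
  have hGhatS : Ghat * (Ψ * Ψᵀ) = Xp * Ψᵀ := by
    rw [hGhat, Matrix.mul_assoc, nonsing_inv_mul _ (isUnit_iff_ne_zero.2 hPD.det_pos.ne'),
      Matrix.mul_one]
  have hbound := l2_opNorm_mul_nonsing_inv_sub_le (isUnit_det_of_mul_norm_le (by positivity) hS')
    hGhatS (l2_opNorm_add_mul_transpose_add_sub_le Xp EXp Ψ EΨ hEX hEΨ)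
    (l2_opNorm_add_mul_transpose_add_sub_le Ψ EΨ Ψ EΨ hEΨ hEΨ)
    (l2_opNorm_nonsing_inv_le (by positivity) hS')
  rw [← hG] at hbound
  refine hbound.trans_eq ?_
  simp only [sigmaMax, opNorm_eq_norm, hsT]
  field_simp
  ring

/-- Norm-bounded identification error (Theorem 1): `‖G − Ĝ‖₂ ≤ T(‖Ĝ‖₂ Γ_W + Γ_Y)/(σ_min(Ψ̃) − √T ε)²`. -/
theorem stmt_11 (n k T : ℕ) (hkT : k ≤ T) (hT : 1 ≤ T)
    (ε εx : ℝ) (hε : 0 ≤ ε) (hεx : 0 ≤ εx)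
    (Xp EXp : Matrix (Fin n) (Fin T) ℝ) (Ψ EΨ : Matrix (Fin k) (Fin T) ℝ)
    (hrank : Ψ.rank = k) (hPD : (Ψ * Ψ.transpose).PosDef)
    (hcolX : ∀ t, Real.sqrt (∑ i, (EXp i t) ^ 2) ≤ εx)
    (hcolΨ : ∀ t, Real.sqrt (∑ i, (EΨ i t) ^ 2) ≤ ε)
    (hPE : sigmaMin Ψ > Real.sqrt T * ε)
    (Ghat G : Matrix (Fin n) (Fin k) ℝ)
    (hGhat : Ghat = Xp * Ψ.transpose * (Ψ * Ψ.transpose)⁻¹)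
    (hG : G = (Xp + EXp) * (Ψ + EΨ).transpose *
      ((Ψ + EΨ) * (Ψ + EΨ).transpose)⁻¹) :
    opNorm (G - Ghat) ≤
      (T : ℝ) * (opNorm Ghat *
          (2 * ε * sigmaMax Ψ / Real.sqrt T + ε ^ 2) +
        (sigmaMax Xp * ε / Real.sqrt T + sigmaMax Ψ * εx / Real.sqrt T + εx * ε))
      / (sigmaMin Ψ - Real.sqrt T * ε) ^ 2 :=
  stmt_11_general n k T hT ε εx hε hεx Xp EXp Ψ EΨ hPD hcolX hcolΨ hPE Ghat G hGhat hG
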